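/- arXiv:2402.04485 — 6 statements merged into one kernel-verified Lean document; each statement's English description precedes it below -/
import Mathlib

section
/- Let S̃ be a finite ground set, g : 2^S̃ → ℝ a submodular set function with strictly positive marginal gains (g(S ∪ {i}) > g(S) for all S ⊆ S̃ and i ∈ S̃ \ S), and D̂ : S̃ → ℝ strictly positive costs. For any two budgets 0 < b < b', the outputs S_b = Greedy(S̃, b) and S_{b'} = Greedy(S̃, b') of the budgeted greedy algorithm satisfy: either S_{b'} = S_b, or g(S_{b'}) > g(S_b). (Lemma 5: increasing the input budget of the budgeted greedy algorithm always leads to a no worse output.) -/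
open Finset

variable {ι : Type*}

/-- The marginal-gain-to-cost ratio `(g(S ∪ {u}) − g(S)) / D̂(u)`. -/
noncomputable def marginalRatio [LinearOrder ι] (g : Finset ι → ℝ) (D : ι → ℝ)
    (S : Finset ι) (u : ι) : ℝ :=
  (g (insert u S) - g S) / D u

/-- One run of the while-loop of the budgeted greedy algorithm, with fuel. -/
noncomputable def greedyAux [LinearOrder ι] (g : Finset ι → ℝ) (D : ι → ℝ)
    (Stilde : Finset ι) (b : ℝ) : ℕ → Finset ι → Finset ι
  | 0, S => S
  | n + 1, S =>
    let T := (Stilde \ S).filter fun u => D u + ∑ i ∈ S, D i < b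
    let T' := T.filter fun u => ∀ v ∈ T, marginalRatio g D S v ≤ marginalRatio g D S u
    if h : T'.Nonempty then greedyAux g D Stilde b n (insert (T'.min' h) S) else S

/-- The budgeted greedy algorithm `Greedy(S̃, b)` (Algorithm 2): starting from `S = ∅`,
while the set `T = {u ∈ S̃ \ S : D̂(u) + Σ_{i∈S} D̂(i) < b}` is nonempty, add to `S` the
element of `T` maximizing the marginal-gain-to-cost ratio (ties broken by the linear
order on `ι`). -/
noncomputable def Greedy [LinearOrder ι] (g : Finset ι → ℝ) (D : ι → ℝ)
    (Stilde : Finset ι) (b : ℝ) : Finset ι :=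
  greedyAux g D Stilde b (Stilde.card + 1) ∅

/-! Run both budgets in lockstep. While the runs pick the same element they stay equal. At the
first divergence the larger budget picks an element `v` that does not fit into the smaller
budget `b`, with a ratio `r` that, by submodularity, bounds every later gain per unit of cost
of the `b`-run. That run spends less than `D v` from then on, so it gains less than
`r · D v = g(S ∪ {v}) − g(S)`, while the `b'`-run gains at least this much because `g` is
monotone. -/

section Maximizers

variable {β : Type*} [LinearOrder β]

def maximizers (f : ι → β) (T : Finset ι) : Finset ι :=
  T.filter fun u => ∀ v ∈ T, f v ≤ f u

variable {f : ι → β} {T T' : Finset ι} {u : ι}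

lemma mem_maximizers : u ∈ maximizers f T ↔ u ∈ T ∧ ∀ v ∈ T, f v ≤ f u :=
  mem_filter

lemma maximizers_subset : maximizers f T ⊆ T :=
  filter_subset _ _

lemma maximizers_nonempty (hT : T.Nonempty) : (maximizers f T).Nonempty := by
  obtain ⟨u, hu, hmax⟩ := exists_max_image T f hT
  exact ⟨u, mem_maximizers.2 ⟨hu, hmax⟩⟩

lemma min'_maximizers_eq_of_subset [LinearOrder ι] (hTT' : T ⊆ T')
    (h : (maximizers f T).Nonempty) (h' : (maximizers f T').Nonempty)
    (hmem : (maximizers f T').min' h' ∈ T) :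
    (maximizers f T).min' h = (maximizers f T').min' h' := by
  obtain ⟨huT, humax⟩ := mem_maximizers.1 ((maximizers f T).min'_mem h)
  obtain ⟨-, hvmax⟩ := mem_maximizers.1 ((maximizers f T').min'_mem h')
  have hfv_le_fu := humax _ hmem
  exact le_antisymm (min'_le _ _ (mem_maximizers.2 ⟨hmem, fun w hw => hvmax w (hTT' hw)⟩))
    (min'_le _ _ (mem_maximizers.2 ⟨hTT' huT, fun w hw => (hvmax w hw).trans hfv_le_fu⟩))

end Maximizers

section Greedy

variable [LinearOrder ι] (g : Finset ι → ℝ) (D : ι → ℝ) (Stilde : Finset ι)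

noncomputable def candidates (b : ℝ) (S : Finset ι) : Finset ι :=
  (Stilde \ S).filter fun u => D u + ∑ i ∈ S, D i < b

variable {g D Stilde}

lemma mem_candidates {b : ℝ} {S : Finset ι} {u : ι} :
    u ∈ candidates D Stilde b S ↔ u ∈ Stilde ∧ u ∉ S ∧ D u + ∑ i ∈ S, D i < b := by
  simp only [candidates, mem_filter, mem_sdiff, and_assoc]

lemma candidates_mono {b b' : ℝ} (hbb' : b ≤ b') (S : Finset ι) :
    candidates D Stilde b S ⊆ candidates D Stilde b' S :=
  fun _ hu =>
    let ⟨hu', huS, hub⟩ := mem_candidates.1 hu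
    mem_candidates.2 ⟨hu', huS, hub.trans_le hbb'⟩

lemma candidates_insert_subset (hD : ∀ i ∈ Stilde, 0 ≤ D i) (b : ℝ) {S : Finset ι} {u : ι}
    (hu : u ∈ Stilde) (huS : u ∉ S) :
    candidates D Stilde b (insert u S) ⊆ candidates D Stilde b S := by
  intro w hw
  obtain ⟨hw', hwuS, hwb⟩ := mem_candidates.1 hw
  rw [sum_insert huS] at hwb
  exact mem_candidates.2 ⟨hw', fun h => hwuS (mem_insert_of_mem h), by linarith [hD u hu]⟩

lemma marginalRatio_insert_le
    (hg : ∀ A B : Finset ι, A ⊆ B → B ⊆ Stilde → ∀ i ∈ Stilde, i ∉ B →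
      g (insert i B) - g B ≤ g (insert i A) - g A)
    {S : Finset ι} {u w : ι} (hS : insert u S ⊆ Stilde) (hw : w ∈ Stilde)
    (hwuS : w ∉ insert u S) (hDw : 0 ≤ D w) :
    marginalRatio g D (insert u S) w ≤ marginalRatio g D S w :=
  div_le_div_of_nonneg_right (hg S _ (subset_insert u S) hS w hw hwuS) hDw

lemma sub_eq_marginalRatio_mul {S : Finset ι} {u : ι} (hu : D u ≠ 0) :
    g (insert u S) - g S = marginalRatio g D S u * D u :=
  (div_mul_cancel₀ _ hu).symm

variable (g D Stilde)

lemma greedyAux_succ (b : ℝ) (n : ℕ) (S : Finset ι) :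
    greedyAux g D Stilde b (n + 1) S =
      if h : (maximizers (marginalRatio g D S) (candidates D Stilde b S)).Nonempty then
        greedyAux g D Stilde b n (insert ((maximizers _ _).min' h) S)
      else S :=
  rfl

lemma greedyAux_succ_eq_self_or_exists (b : ℝ) (n : ℕ) (S : Finset ι) :
    greedyAux g D Stilde b (n + 1) S = S ∨
      ∃ u ∈ candidates D Stilde b S,
        (∀ w ∈ candidates D Stilde b S, marginalRatio g D S w ≤ marginalRatio g D S u) ∧
        greedyAux g D Stilde b (n + 1) S = greedyAux g D Stilde b n (insert u S) := by
  rw [greedyAux_succ]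
  split_ifs with h
  · obtain ⟨hu, humax⟩ := mem_maximizers.1 (min'_mem _ h)
    exact .inr ⟨_, hu, humax, rfl⟩
  · exact .inl rfl

lemma greedyAux_eq_or_sum_lt (b : ℝ) (n : ℕ) (S : Finset ι) :
    greedyAux g D Stilde b n S = S ∨ ∑ i ∈ greedyAux g D Stilde b n S, D i < b := by
  induction n generalizing S with
  | zero => exact .inl rfl
  | succ n ih =>
    obtain h | ⟨u, hu, -, h⟩ := greedyAux_succ_eq_self_or_exists g D Stilde b n S
    · exact .inl h
    obtain ⟨-, huS, hub⟩ := mem_candidates.1 hu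
    rw [h]
    rcases ih (insert u S) with h' | h'
    · rw [h', sum_insert huS]
      exact .inr hub
    · exact .inr h'

variable {g D Stilde}

lemma le_greedyAux (hg : ∀ S ⊆ Stilde, ∀ i ∈ Stilde, i ∉ S → g S ≤ g (insert i S))
    (b : ℝ) (n : ℕ) {S : Finset ι} (hS : S ⊆ Stilde) :
    g S ≤ g (greedyAux g D Stilde b n S) := by
  induction n generalizing S with
  | zero => exact le_rfl
  | succ n ih =>
    obtain h | ⟨u, hu, -, h⟩ := greedyAux_succ_eq_self_or_exists g D Stilde b n S
    · rw [h]
    obtain ⟨hu', huS, -⟩ := mem_candidates.1 hu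
    rw [h]
    exact (hg S hS u hu' huS).trans (ih (insert_subset hu' hS))

/-- `r` keeps bounding the ratios along the run: candidate sets only shrink and, by
submodularity, ratios only decrease. -/
lemma greedyAux_gain_le
    (hg : ∀ A B : Finset ι, A ⊆ B → B ⊆ Stilde → ∀ i ∈ Stilde, i ∉ B →
      g (insert i B) - g B ≤ g (insert i A) - g A)
    (hD : ∀ i ∈ Stilde, 0 < D i) (b : ℝ) (n : ℕ) {S : Finset ι} (hS : S ⊆ Stilde) {r : ℝ}
    (hr : ∀ u ∈ candidates D Stilde b S, marginalRatio g D S u ≤ r) :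
    g (greedyAux g D Stilde b n S) - g S ≤
      r * (∑ i ∈ greedyAux g D Stilde b n S, D i - ∑ i ∈ S, D i) := by
  induction n generalizing S with
  | zero => simp [greedyAux]
  | succ n ih =>
    obtain h | ⟨u, hu, -, h⟩ := greedyAux_succ_eq_self_or_exists g D Stilde b n S
    · simp [h]
    obtain ⟨hu', huS, -⟩ := mem_candidates.1 hu
    have huS_sub : insert u S ⊆ Stilde := insert_subset hu' hS
    have hr' : ∀ w ∈ candidates D Stilde b (insert u S), marginalRatio g D (insert u S) w ≤ r :=
      fun w hw => by
        obtain ⟨hw', hwuS, -⟩ := mem_candidates.1 hw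
        exact (marginalRatio_insert_le hg huS_sub hw' hwuS (hD w hw').le).trans
          (hr w (candidates_insert_subset (fun i hi => (hD i hi).le) b hu' huS hw))
    have hstep : g (insert u S) - g S ≤ r * D u := by
      rw [sub_eq_marginalRatio_mul (hD u hu').ne']
      exact mul_le_mul_of_nonneg_right (hr u hu) (hD u hu').le
    have hrest := ih huS_sub hr'
    rw [sum_insert huS] at hrest
    rw [h]
    linarith

lemma greedyAux_lt_of_budget_le
    (hg_submod : ∀ A B : Finset ι, A ⊆ B → B ⊆ Stilde → ∀ i ∈ Stilde, i ∉ B →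
      g (insert i B) - g B ≤ g (insert i A) - g A)
    (hg_strict : ∀ S : Finset ι, S ⊆ Stilde → ∀ i ∈ Stilde, i ∉ S → g S < g (insert i S))
    (hD : ∀ i ∈ Stilde, 0 < D i) (b : ℝ) (n : ℕ) {S : Finset ι} (hS : S ⊆ Stilde) {v : ι}
    (hv : v ∈ Stilde) (hvS : v ∉ S) (hvb : b ≤ D v + ∑ i ∈ S, D i)
    (hvmax : ∀ w ∈ candidates D Stilde b S, marginalRatio g D S w ≤ marginalRatio g D S v) :
    g (greedyAux g D Stilde b n S) < g (insert v S) := by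
  have hDv : 0 < D v := hD v hv
  have hstop := greedyAux_eq_or_sum_lt g D Stilde b n S
  set R := greedyAux g D Stilde b n S
  have hcost : ∑ i ∈ R, D i - ∑ i ∈ S, D i < D v := by
    rcases hstop with h | h
    · rwa [h, sub_self]
    · linarith
  have hratio : 0 < marginalRatio g D S v :=
    div_pos (sub_pos.2 (hg_strict S hS v hv hvS)) hDv
  calc g R = g S + (g R - g S) := by ring
    _ ≤ g S + marginalRatio g D S v * (∑ i ∈ R, D i - ∑ i ∈ S, D i) := by
      gcongr
      exact greedyAux_gain_le hg_submod hD b n hS hvmax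
    _ < g S + marginalRatio g D S v * D v := by gcongr
    _ = g (insert v S) := by rw [← sub_eq_marginalRatio_mul hDv.ne']; ring

lemma greedyAux_budget_monotone
    (hg_submod : ∀ A B : Finset ι, A ⊆ B → B ⊆ Stilde → ∀ i ∈ Stilde, i ∉ B →
      g (insert i B) - g B ≤ g (insert i A) - g A)
    (hg_strict : ∀ S : Finset ι, S ⊆ Stilde → ∀ i ∈ Stilde, i ∉ S → g S < g (insert i S))
    (hD : ∀ i ∈ Stilde, 0 < D i) {b b' : ℝ} (hbb' : b ≤ b') (n : ℕ) {S : Finset ι}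
    (hS : S ⊆ Stilde) :
    greedyAux g D Stilde b' n S = greedyAux g D Stilde b n S ∨
      g (greedyAux g D Stilde b n S) < g (greedyAux g D Stilde b' n S) := by
  induction n generalizing S with
  | zero => exact .inl rfl
  | succ n ih =>
    have hsub := candidates_mono (D := D) (Stilde := Stilde) hbb' S
    rw [greedyAux_succ g D Stilde b', greedyAux_succ g D Stilde b]
    by_cases h' : (maximizers (marginalRatio g D S) (candidates D Stilde b' S)).Nonempty
    swap
    · have h : ¬(maximizers (marginalRatio g D S) (candidates D Stilde b S)).Nonempty :=
        fun h => h' (maximizers_nonempty ((h.mono maximizers_subset).mono hsub))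
      rw [dif_neg h', dif_neg h]
      exact .inl rfl
    rw [dif_pos h']
    set v := (maximizers _ _).min' h'
    obtain ⟨hvb', hvmax⟩ := mem_maximizers.1 (min'_mem _ h')
    obtain ⟨hv, hvS, -⟩ := mem_candidates.1 hvb'
    by_cases hvb : v ∈ candidates D Stilde b S
    · have h : (maximizers (marginalRatio g D S) (candidates D Stilde b S)).Nonempty :=
        maximizers_nonempty ⟨v, hvb⟩
      rw [dif_pos h, min'_maximizers_eq_of_subset hsub h h' hvb]
      exact ih (insert_subset hv hS)
    · right
      rw [← greedyAux_succ]
      refine (greedyAux_lt_of_budget_le hg_submod hg_strict hD b (n + 1) hS hv hvS ?_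
        fun w hw => hvmax w (hsub hw)).trans_le
          (le_greedyAux (fun T hT i hi hiT => (hg_strict T hT i hi hiT).le) b' n
            (insert_subset hv hS))
      by_contra! hlt
      exact hvb (mem_candidates.2 ⟨hv, hvS, hlt⟩)

end Greedy

theorem greedy_budget_monotone_general [LinearOrder ι] (Stilde : Finset ι) (g : Finset ι → ℝ)
    (hg_submod : ∀ A B : Finset ι, A ⊆ B → B ⊆ Stilde → ∀ i ∈ Stilde, i ∉ B →
      g (insert i B) - g B ≤ g (insert i A) - g A)
    (hg_strict : ∀ S : Finset ι, S ⊆ Stilde → ∀ i ∈ Stilde, i ∉ S → g S < g (insert i S))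
    (D : ι → ℝ) (hD : ∀ i ∈ Stilde, 0 < D i)
    (b b' : ℝ) (hbb' : b < b') :
    Greedy g D Stilde b' = Greedy g D Stilde b ∨
      g (Greedy g D Stilde b) < g (Greedy g D Stilde b') :=
  greedyAux_budget_monotone hg_submod hg_strict hD hbb'.le _ (empty_subset Stilde)

/-- Lemma 5: increasing the input budget of the budgeted greedy algorithm always leads
to a no worse output: for budgets `0 < b < b'`, either `Greedy(S̃, b') = Greedy(S̃, b)`
or `g(Greedy(S̃, b')) > g(Greedy(S̃, b))`. -/
theorem greedy_budget_monotone [LinearOrder ι] (Stilde : Finset ι) (g : Finset ι → ℝ)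
    (hg_submod : ∀ A B : Finset ι, A ⊆ B → B ⊆ Stilde → ∀ i ∈ Stilde, i ∉ B →
      g (insert i B) - g B ≤ g (insert i A) - g A)
    (hg_strict : ∀ S : Finset ι, S ⊆ Stilde → ∀ i ∈ Stilde, i ∉ S → g S < g (insert i S))
    (D : ι → ℝ) (hD : ∀ i ∈ Stilde, 0 < D i)
    (b b' : ℝ) (hb : 0 < b) (hbb' : b < b') :
    Greedy g D Stilde b' = Greedy g D Stilde b ∨
      g (Greedy g D Stilde b) < g (Greedy g D Stilde b') :=
  greedy_budget_monotone_general Stilde g hg_submod hg_strict D hD b b' hbb'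
end

section
/- Let d, t, m be positive integers with m ≤ t, and let λ > 0 and L > 0. Let X ∈ ℝ^{m×d} be a matrix whose rows x_1, …, x_m all satisfy ‖x_s‖₂ ≤ L, and let Ṽ ∈ ℝ^{d×d} be a symmetric matrix such that Ṽ − XᵀX − λI_d is positive semidefinite. Then det(Ṽ − XᵀX) / det(Ṽ) ≥ (1 + tL²/(λd))^{−d}. (Core matrix inequality of Lemma 2: with parameter β ≤ (1 + tL²/(λd))^{−d}, no client can be essential, eliminating infinite critical values.) -/
open Matrix

/-!
With `A = Ṽ - XᵀX ⪰ λ I` we have `det Ṽ = det A * det (1 + A⁻¹ XᵀX)`. Since `A⁻¹ = Bᴴ B`, the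
matrix `A⁻¹ XᵀX` has the determinant and trace of the positive semidefinite `B XᵀX Bᴴ`, so
AM-GM on its eigenvalues bounds `det (1 + A⁻¹ XᵀX)` by `(1 + tr (A⁻¹ XᵀX) / d) ^ d`. Finally
`tr (A⁻¹ XᵀX) = ∑ₛ xₛᵀ A⁻¹ xₛ ≤ ∑ₛ ‖xₛ‖² / λ ≤ t L² / λ`, because `A⁻¹ ⪯ λ⁻¹ I`.
-/

theorem Real.prod_le_arith_mean_pow {ι : Type*} [Fintype ι] (z : ι → ℝ) (hz : ∀ i, 0 ≤ z i) :
    ∏ i, z i ≤ ((∑ i, z i) / Fintype.card ι) ^ Fintype.card ι := by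
  rcases isEmpty_or_nonempty ι with _ | _
  · simp
  have hamgm := Real.geom_mean_le_arith_mean Finset.univ (fun _ ↦ 1) z (fun _ _ ↦ zero_le_one)
    (by simp [Fintype.card_pos]) (fun i _ ↦ hz i)
  simp only [Real.rpow_one, one_mul, Finset.sum_const, Finset.card_univ, nsmul_eq_mul,
    mul_one] at hamgm
  have hprod : 0 ≤ ∏ i, z i := Finset.prod_nonneg fun i _ ↦ hz i
  calc ∏ i, z i = ((∏ i, z i) ^ (Fintype.card ι : ℝ)⁻¹) ^ Fintype.card ι :=
        (Real.rpow_inv_natCast_pow hprod Fintype.card_ne_zero).symm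
    _ ≤ _ := pow_le_pow_left₀ (Real.rpow_nonneg hprod _) hamgm _

namespace Matrix

theorem PosSemidef.posDef_of_sub_smul_one {n : Type*} [DecidableEq n] {A : Matrix n n ℝ}
    {c : ℝ} (hA : (A - c • 1).PosSemidef) (hc : 0 < c) : A.PosDef := by
  simpa using PosDef.posSemidef_add hA (PosDef.one.smul hc)

variable {m n : Type*} [Fintype m] [Fintype n]

theorem trace_mul_transpose_mul_self {R : Type*} [CommSemiring R] (B : Matrix n n R)
    (X : Matrix m n R) : (B * (Xᵀ * X)).trace = ∑ s, X s ⬝ᵥ B *ᵥ X s := by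
  rw [← Matrix.mul_assoc, trace_mul_comm, ← Matrix.mul_assoc]
  simp only [trace, diag_apply, mul_apply, transpose_apply, dotProduct, mulVec, Finset.sum_mul,
    Finset.mul_sum]
  refine Finset.sum_congr rfl fun s _ ↦ ?_
  rw [Finset.sum_comm]
  exact Finset.sum_congr rfl fun i _ ↦ Finset.sum_congr rfl fun j _ ↦ by ring

theorem _root_.EuclideanSpace.norm_toLp_sq (v : n → ℝ) : ‖WithLp.toLp 2 v‖ ^ 2 = v ⬝ᵥ v := by
  rw [← real_inner_self_eq_norm_sq, EuclideanSpace.inner_toLp_toLp, star_trivial]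

variable [DecidableEq n]

theorem PosSemidef.det_le_trace_div_card_pow {P : Matrix n n ℝ} (hP : P.PosSemidef) :
    P.det ≤ (P.trace / Fintype.card n) ^ Fintype.card n := by
  rw [hP.isHermitian.det_eq_prod_eigenvalues, hP.isHermitian.trace_eq_sum_eigenvalues]
  simpa using Real.prod_le_arith_mean_pow _ hP.eigenvalues_nonneg

theorem PosSemidef.det_one_add_le {M : Matrix n n ℝ} (hM : M.PosSemidef) {T : ℝ}
    (hT : M.trace ≤ T) : (1 + M).det ≤ (1 + T / Fintype.card n) ^ Fintype.card n := by
  rcases isEmpty_or_nonempty n with _ | _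
  · simp
  have hdet := (PosSemidef.one.add hM).det_le_trace_div_card_pow
  rw [trace_add, trace_one, add_div, div_self (by positivity)] at hdet
  have htr := hM.trace_nonneg
  exact hdet.trans (by gcongr)

open scoped MatrixOrder in
theorem PosSemidef.det_one_add_mul_le {P N : Matrix n n ℝ} (hP : P.PosSemidef)
    (hN : N.PosSemidef) {T : ℝ} (hT : (P * N).trace ≤ T) :
    (1 + P * N).det ≤ (1 + T / Fintype.card n) ^ Fintype.card n := by
  obtain ⟨B, rfl⟩ := CStarAlgebra.nonneg_iff_eq_star_mul_self.mp hP.nonneg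
  rw [star_eq_conjTranspose, Matrix.mul_assoc, trace_mul_comm] at hT
  rw [star_eq_conjTranspose, Matrix.mul_assoc, det_one_add_mul_comm]
  exact (hN.mul_mul_conjTranspose_same B).det_one_add_le hT

theorem PosSemidef.dotProduct_inv_mulVec_le {A : Matrix n n ℝ} {c : ℝ}
    (hA : (A - c • 1).PosSemidef) (hc : 0 < c) (x : n → ℝ) :
    x ⬝ᵥ A⁻¹ *ᵥ x ≤ x ⬝ᵥ x / c := by
  -- with `y = A⁻¹ x`: `c ‖y‖² ≤ ⟪x, y⟫` and `0 ≤ ‖x - c y‖²` give `c ⟪x, y⟫ ≤ ‖x‖²`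
  set y := A⁻¹ *ᵥ x
  have hAy : A *ᵥ y = x := by
    rw [mulVec_mulVec, mul_nonsing_inv _ (hA.posDef_of_sub_smul_one hc).det_pos.ne'.isUnit,
      one_mulVec]
  have hy : c * (y ⬝ᵥ y) ≤ x ⬝ᵥ y := by
    have := hA.dotProduct_mulVec_nonneg y
    simp only [star_trivial, sub_mulVec, smul_mulVec, one_mulVec, hAy, dotProduct_sub,
      dotProduct_smul, smul_eq_mul, sub_nonneg] at this
    rwa [dotProduct_comm y x] at this
  have hsq : 0 ≤ (x - c • y) ⬝ᵥ (x - c • y) := by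
    simpa using (PosSemidef.one (n := n) (R := ℝ)).dotProduct_mulVec_nonneg (x - c • y)
  simp only [sub_dotProduct, dotProduct_sub, smul_dotProduct, dotProduct_smul, smul_eq_mul,
    dotProduct_comm y x] at hsq
  rw [le_div_iff₀ hc]
  nlinarith

theorem PosSemidef.trace_inv_mul_transpose_mul_self_le {A : Matrix n n ℝ} {c L : ℝ}
    (hA : (A - c • 1).PosSemidef) (hc : 0 < c) (X : Matrix m n ℝ)
    (hX : ∀ s, ‖WithLp.toLp 2 (X s)‖ ≤ L) :
    (A⁻¹ * (Xᵀ * X)).trace ≤ Fintype.card m * L ^ 2 / c := by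
  rw [trace_mul_transpose_mul_self, mul_div_assoc, ← nsmul_eq_mul, ← Finset.card_univ,
    ← Finset.sum_const]
  refine Finset.sum_le_sum fun s _ ↦ (hA.dotProduct_inv_mulVec_le hc _).trans ?_
  rw [← EuclideanSpace.norm_toLp_sq]
  gcongr
  exact hX s

end Matrix

theorem det_ratio_lower_bound_general (d t m : ℕ) (hmt : m ≤ t) (lam L : ℝ) (hlam : 0 < lam)
    (X : Matrix (Fin m) (Fin d) ℝ)
    (hX : ∀ s : Fin m, ‖(WithLp.equiv 2 (Fin d → ℝ)).symm (X s)‖ ≤ L)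
    (V : Matrix (Fin d) (Fin d) ℝ)
    (hpsd : (V - Xᵀ * X - lam • (1 : Matrix (Fin d) (Fin d) ℝ)).PosSemidef) :
    ((1 : ℝ) + t * L ^ 2 / (lam * d)) ^ (-(d : ℤ)) ≤ (V - Xᵀ * X).det / V.det := by
  set A := V - Xᵀ * X
  set D := (1 + A⁻¹ * (Xᵀ * X)).det
  have hA : A.PosDef := hpsd.posDef_of_sub_smul_one hlam
  have hN : (Xᵀ * X).PosSemidef := by simpa using posSemidef_conjTranspose_mul_self X
  have hdetV : V.det = A.det * D := by
    rw [← det_mul, mul_add, mul_one, mul_nonsing_inv_cancel_left _ _ hA.det_pos.ne'.isUnit,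
      sub_add_cancel]
  have hD : 0 < D := by
    have hV : V.PosDef := sub_add_cancel V (Xᵀ * X) ▸ hA.add_posSemidef hN
    exact (mul_pos_iff_of_pos_left hA.det_pos).mp (hdetV ▸ hV.det_pos)
  have htr : (A⁻¹ * (Xᵀ * X)).trace ≤ t * L ^ 2 / lam :=
    (hpsd.trace_inv_mul_transpose_mul_self_le hlam X hX).trans <| by
      rw [Fintype.card_fin]; gcongr
  have hD_le : D ≤ (1 + t * L ^ 2 / (lam * d)) ^ d := by
    simpa [mul_comm lam, div_div] using hA.inv.posSemidef.det_one_add_mul_le hN htr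
  rw [hdetV, div_mul_cancel_left₀ hA.det_pos.ne', _root_.zpow_neg, zpow_natCast]
  exact inv_anti₀ hD hD_le

/-- Core matrix inequality of Lemma 2 (elimination of infinite critical values): if the
rows of `X ∈ ℝ^{m×d}` have Euclidean norm at most `L` (with `m ≤ t`) and the symmetric
matrix `Ṽ` satisfies `Ṽ − XᵀX − λI ⪰ 0`, then
`det(Ṽ − XᵀX)/det(Ṽ) ≥ (1 + tL²/(λd))^{−d}`. -/
theorem det_ratio_lower_bound (d t m : ℕ) (hd : 0 < d) (ht : 0 < t) (hm : 0 < m)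
    (hmt : m ≤ t) (lam L : ℝ) (hlam : 0 < lam) (hL : 0 < L)
    (X : Matrix (Fin m) (Fin d) ℝ)
    (hX : ∀ s : Fin m, ‖(WithLp.equiv 2 (Fin d → ℝ)).symm (X s)‖ ≤ L)
    (V : Matrix (Fin d) (Fin d) ℝ) (hV : V.IsSymm)
    (hpsd : (V - Xᵀ * X - lam • (1 : Matrix (Fin d) (Fin d) ℝ)).PosSemidef) :
    ((1 : ℝ) + t * L ^ 2 / (lam * d)) ^ (-(d : ℤ)) ≤ (V - Xᵀ * X).det / V.det :=
  det_ratio_lower_bound_general d t m hmt lam L hlam X hX V hpsd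
end

section
/- Let λ > 0, let A ∈ ℝ^{d×d} be symmetric, and let X ∈ ℝ^{m×d} be such that A − XᵀX − λI_d is positive semidefinite. Then A and A − XᵀX are positive definite (hence invertible), and det(A − XᵀX)/det(A) ≥ λ^d / det(λI_d + XᵀX). -/
/-!
Write `B = A - XᵀX`, so that `λI ⪯ B`. Then `B` is positive definite and `B⁻¹ ⪯ λ⁻¹I`.
The matrix determinant lemma gives `det A = det B · det(I + X B⁻¹ Xᵀ)` and
`det(λI + XᵀX) = λ^d · det(I + λ⁻¹ X Xᵀ)`, and `X B⁻¹ Xᵀ ⪯ λ⁻¹ X Xᵀ`. Since the determinant is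
monotone on positive definite matrices, `det(I + X B⁻¹ Xᵀ) ≤ det(I + λ⁻¹ X Xᵀ)`, which is the
claim after dividing. Monotonicity itself comes from conjugating `P ⪯ Q` by `P^{-1/2}`: this gives
`I ⪯ P^{-1/2} Q P^{-1/2}`, all of whose eigenvalues are at least `1`.
-/

open Matrix
open scoped MatrixOrder ComplexOrder

namespace Matrix

section RCLike

variable {m n 𝕜 : Type*} [Fintype n] [RCLike 𝕜]

lemma mul_mul_conjTranspose_le_mul_mul_conjTranspose [Fintype m] {P Q : Matrix n n 𝕜}
    (h : P ≤ Q) (X : Matrix m n 𝕜) : X * P * Xᴴ ≤ X * Q * Xᴴ := by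
  rw [le_iff, ← Matrix.sub_mul, ← Matrix.mul_sub]
  exact h.mul_mul_conjTranspose_same X

lemma PosDef.sqrt_inv_mul_mul_sqrt_inv [DecidableEq n] {P : Matrix n n 𝕜} (hP : P.PosDef) :
    CFC.sqrt P⁻¹ * P * CFC.sqrt P⁻¹ = 1 := by
  have hS : IsUnit (CFC.sqrt P).det := by
    rw [← isUnit_iff_isUnit_det, CFC.isUnit_sqrt_iff _ hP.posSemidef.nonneg]
    exact hP.isUnit
  rw [← hP.posSemidef.inv_sqrt]
  nth_rw 2 [← CFC.sqrt_mul_sqrt_self P hP.posSemidef.nonneg]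
  rw [← Matrix.mul_assoc, nonsing_inv_mul _ hS, Matrix.one_mul, mul_nonsing_inv _ hS]

end RCLike

variable {n : Type*} [Fintype n] [DecidableEq n]

lemma one_le_det_of_one_le {M : Matrix n n ℝ} (h : 1 ≤ M) : 1 ≤ M.det := by
  have hM : M.IsHermitian := by simpa using h.1.add isHermitian_one
  have h_spec : ∀ x ∈ spectrum ℝ M, 1 ≤ x :=
    (algebraMap_le_iff_le_spectrum (r := (1 : ℝ)) hM.isSelfAdjoint).1 (by simpa using h)
  rw [hM.det_eq_prod_eigenvalues]
  exact Finset.one_le_prod fun i _ => by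
    simpa using h_spec _ (hM.eigenvalues_mem_spectrum_real i)

lemma PosDef.det_le_det {P Q : Matrix n n ℝ} (hP : P.PosDef) (h : P ≤ Q) : P.det ≤ Q.det := by
  set S := CFC.sqrt P⁻¹
  have hS : IsSelfAdjoint S := .of_nonneg (CFC.sqrt_nonneg _)
  have h_one_le : 1 ≤ S * Q * S := hP.sqrt_inv_mul_mul_sqrt_inv ▸ hS.conjugate_le_conjugate h
  have h_det : (S * Q * S).det = Q.det / P.det := by
    rw [det_mul, det_mul, mul_right_comm, ← det_mul,
      CFC.sqrt_mul_sqrt_self _ hP.inv.posSemidef.nonneg, det_nonsing_inv, Ring.inverse_eq_inv',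
      inv_mul_eq_div]
  rw [← one_le_div₀ hP.det_pos, ← h_det]
  exact one_le_det_of_one_le h_one_le

lemma PosDef.inv_le_smul_one {B : Matrix n n ℝ} (hB : B.PosDef) {c : ℝ} (hc : 0 < c)
    (h : c • 1 ≤ B) : B⁻¹ ≤ c⁻¹ • 1 := by
  set S := CFC.sqrt B⁻¹
  have hS : IsSelfAdjoint S := .of_nonneg (CFC.sqrt_nonneg _)
  have h_conj : c • B⁻¹ ≤ 1 := by
    have := hS.conjugate_le_conjugate h
    rwa [hB.sqrt_inv_mul_mul_sqrt_inv, Matrix.mul_smul, Matrix.mul_one, Matrix.smul_mul,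
      CFC.sqrt_mul_sqrt_self _ hB.inv.posSemidef.nonneg] at this
  simpa [smul_smul, hc.ne'] using smul_le_smul_of_nonneg_left h_conj (inv_nonneg.2 hc.le)

end Matrix

theorem det_ratio_chain_general (d m : ℕ) (lam : ℝ) (hlam : 0 < lam)
    (A : Matrix (Fin d) (Fin d) ℝ)
    (X : Matrix (Fin m) (Fin d) ℝ)
    (hpsd : (A - Xᵀ * X - lam • (1 : Matrix (Fin d) (Fin d) ℝ)).PosSemidef) :
    A.PosDef ∧ (A - Xᵀ * X).PosDef ∧
      lam ^ d / (lam • (1 : Matrix (Fin d) (Fin d) ℝ) + Xᵀ * X).det ≤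
        (A - Xᵀ * X).det / A.det := by
  set B := A - Xᵀ * X
  have hXX : (Xᵀ * X).PosSemidef := by
    simpa using posSemidef_conjTranspose_mul_self X
  have hlamI : (lam • (1 : Matrix (Fin d) (Fin d) ℝ)).PosDef := PosDef.one.smul hlam
  have hB : B.PosDef := by simpa using hlamI.add_posSemidef hpsd
  have hA : A.PosDef := by simpa [B] using hB.add_posSemidef hXX
  refine ⟨hA, hB, ?_⟩
  have h_lamI_inv : (lam • (1 : Matrix (Fin d) (Fin d) ℝ))⁻¹ = lam⁻¹ • 1 :=
    inv_eq_left_inv (by simp [smul_smul, hlam.ne'])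
  have h_det_A : A.det = B.det * (1 + X * B⁻¹ * Xᵀ).det := by
    simpa [B] using det_add_mul Xᵀ X hB.det_pos.ne'.isUnit
  have h_det_lam : (lam • (1 : Matrix (Fin d) (Fin d) ℝ) + Xᵀ * X).det =
      lam ^ d * (1 + X * (lam⁻¹ • (1 : Matrix (Fin d) (Fin d) ℝ)) * Xᵀ).det := by
    simpa [h_lamI_inv, det_smul] using det_add_mul Xᵀ X hlamI.det_pos.ne'.isUnit
  have h_le : 1 + X * B⁻¹ * Xᵀ ≤ 1 + X * (lam⁻¹ • (1 : Matrix (Fin d) (Fin d) ℝ)) * Xᵀ := by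
    gcongr
    simpa using mul_mul_conjTranspose_le_mul_mul_conjTranspose
      (hB.inv_le_smul_one hlam (le_iff.2 hpsd)) X
  have h_pos : (1 + X * B⁻¹ * Xᵀ).PosDef := by
    simpa using PosDef.one.add_posSemidef (hB.inv.posSemidef.mul_mul_conjTranspose_same X)
  rw [h_det_A, h_det_lam, div_mul_cancel_left₀ (pow_pos hlam d).ne',
    div_mul_cancel_left₀ hB.det_pos.ne']
  exact inv_anti₀ h_pos.det_pos (h_pos.det_le_det h_le)

/-- Main chain of inequalities in the proof of the elimination of infinite critical
values: if `A − XᵀX − λI ⪰ 0` with `λ > 0`, then `A` and `A − XᵀX` are positive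
definite (hence invertible), and `det(A − XᵀX)/det(A) ≥ λ^d / det(λI + XᵀX)`. -/
theorem det_ratio_chain (d m : ℕ) (lam : ℝ) (hlam : 0 < lam)
    (A : Matrix (Fin d) (Fin d) ℝ) (hA : A.IsSymm)
    (X : Matrix (Fin m) (Fin d) ℝ)
    (hpsd : (A - Xᵀ * X - lam • (1 : Matrix (Fin d) (Fin d) ℝ)).PosSemidef) :
    A.PosDef ∧ (A - Xᵀ * X).PosDef ∧
      lam ^ d / (lam • (1 : Matrix (Fin d) (Fin d) ℝ) + Xᵀ * X).det ≤
        (A - Xᵀ * X).det / A.det :=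
  det_ratio_chain_general d m lam hlam A X hpsd
end

section
/- Suppose x_1, x_2, …, x_t ∈ ℝ^d satisfy ‖x_s‖₂ ≤ L for all 1 ≤ s ≤ t, and let V̄_t = λI_d + Σ_{s=1}^{t} x_s x_sᵀ for some λ > 0. Then det(V̄_t) ≤ (λ + tL²/d)^d. -/
/-!
`V̄_t` is positive semidefinite, so AM-GM applied to its eigenvalues gives
`det V̄_t ≤ (tr V̄_t / d)^d`, and `tr V̄_t = dλ + Σ_s ‖x_s‖² ≤ dλ + tL²`.
-/

open Matrix Finset

theorem Real.prod_le_sum_div_card_pow {ι : Type*} (s : Finset ι) {z : ι → ℝ}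
    (hz : ∀ i ∈ s, 0 ≤ z i) : ∏ i ∈ s, z i ≤ ((∑ i ∈ s, z i) / #s) ^ #s := by
  rcases s.eq_empty_or_nonempty with rfl | hs
  · simp
  have hcard : (#s : ℝ) ≠ 0 := by exact_mod_cast hs.card_ne_zero
  have amgm := Real.geom_mean_le_arith_mean_weighted s (fun _ ↦ (#s : ℝ)⁻¹) z
    (fun _ _ ↦ by positivity) (by simp [hcard]) hz
  calc ∏ i ∈ s, z i = (∏ i ∈ s, z i ^ (#s : ℝ)⁻¹) ^ #s := by
        rw [← prod_pow]
        exact prod_congr rfl fun i hi ↦ (Real.rpow_inv_natCast_pow (hz i hi) hs.card_ne_zero).symm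
    _ ≤ ((∑ i ∈ s, z i) / #s) ^ #s := by
        gcongr
        · exact prod_nonneg fun i hi ↦ Real.rpow_nonneg (hz i hi) _
        · rwa [← mul_sum, inv_mul_eq_div] at amgm

theorem Matrix.PosSemidef.det_le_trace_div_card_pow_s12 {n : Type*} [Fintype n] [DecidableEq n]
    {A : Matrix n n ℝ} (hA : A.PosSemidef) :
    A.det ≤ (A.trace / Fintype.card n) ^ Fintype.card n := by
  simpa [hA.isHermitian.det_eq_prod_eigenvalues, hA.isHermitian.trace_eq_sum_eigenvalues] using
    Real.prod_le_sum_div_card_pow univ fun i _ ↦ hA.eigenvalues_nonneg i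

theorem Matrix.posSemidef_vecMulVec_self {n : Type*} [Fintype n] (v : n → ℝ) :
    (vecMulVec v v).PosSemidef := by
  simpa using posSemidef_vecMulVec_self_star v

theorem dotProduct_self_le_sq_of_norm_le {n : Type*} [Fintype n] {v : n → ℝ} {L : ℝ}
    (hv : ‖(WithLp.equiv 2 (n → ℝ)).symm v‖ ≤ L) : v ⬝ᵥ v ≤ L ^ 2 := by
  have := pow_le_pow_left₀ (norm_nonneg _) hv 2
  rw [EuclideanSpace.real_norm_sq_eq] at this
  simpa [dotProduct, sq] using this

theorem Matrix.trace_smul_one_add_sum_vecMulVec_self_le {n ι : Type*} [Fintype n] [DecidableEq n]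
    [Fintype ι] (lam : ℝ) {L : ℝ} {x : ι → n → ℝ} (hx : ∀ s, x s ⬝ᵥ x s ≤ L ^ 2) :
    (lam • (1 : Matrix n n ℝ) + ∑ s, vecMulVec (x s) (x s)).trace ≤
      Fintype.card n * lam + Fintype.card ι * L ^ 2 := by
  simpa [trace_sum, mul_comm] using sum_le_sum fun s (_ : s ∈ univ) ↦ hx s

/-- Determinant–trace inequality (Lemma 10 of Abbasi-Yadkori et al. (2011)): if
`x_1, …, x_t ∈ ℝ^d` satisfy `‖x_s‖₂ ≤ L` and `V̄_t = λI + Σ_{s=1}^t x_s x_sᵀ` with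
`λ > 0`, then `det(V̄_t) ≤ (λ + tL²/d)^d`. -/
theorem det_trace_inequality (d t : ℕ) (lam L : ℝ) (hlam : 0 < lam)
    (x : Fin t → Fin d → ℝ)
    (hx : ∀ s : Fin t, ‖(WithLp.equiv 2 (Fin d → ℝ)).symm (x s)‖ ≤ L) :
    (lam • (1 : Matrix (Fin d) (Fin d) ℝ) + ∑ s : Fin t, vecMulVec (x s) (x s)).det ≤
      (lam + t * L ^ 2 / d) ^ d := by
  rcases d.eq_zero_or_pos with rfl | hd
  · simp
  set V := lam • (1 : Matrix (Fin d) (Fin d) ℝ) + ∑ s : Fin t, vecMulVec (x s) (x s)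
  have hV : V.PosSemidef := (PosSemidef.one.smul hlam.le).add
    (posSemidef_sum _ fun s _ ↦ posSemidef_vecMulVec_self (x s))
  have htrace : V.trace ≤ d * lam + t * L ^ 2 := by
    simpa only [Fintype.card_fin] using trace_smul_one_add_sum_vecMulVec_self_le lam fun s ↦
      dotProduct_self_le_sq_of_norm_le (hx s)
  calc V.det ≤ (V.trace / d) ^ d := by simpa using hV.det_le_trace_div_card_pow_s12
    _ ≤ (lam + t * L ^ 2 / d) ^ d := by
        gcongr
        · exact div_nonneg hV.trace_nonneg d.cast_nonneg
        · rw [div_le_iff₀ (Nat.cast_pos.mpr hd)]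
          calc V.trace ≤ d * lam + t * L ^ 2 := htrace
            _ = (lam + t * L ^ 2 / d) * d := by field_simp
end

section
/- Let X_1, X_2, …, X_n be a sequence of vectors in ℝ^d, let V be a d×d symmetric positive definite matrix, and define V_t = V + Σ_{s=1}^{t} X_s X_sᵀ (so V_0 = V). Then log(det(V_n)/det(V)) ≤ Σ_{t=1}^{n} ‖X_t‖²_{V_{t−1}^{−1}}, where ‖x‖²_M = xᵀMx. -/
/-!
By the matrix determinant lemma, `det (W + x xᵀ) = det W * (1 + xᵀ W⁻¹ x)`, so each rank-one
update raises `log det` by `log (1 + ‖x‖²_{W⁻¹}) ≤ ‖x‖²_{W⁻¹}`. Summing these increments over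
`V_0, V_1, …, V_n` telescopes to `log (det V_n / det V)`.
-/

open Matrix Finset

theorem Matrix.det_add_vecMulVec {m α : Type*} [Fintype m] [DecidableEq m] [CommRing α]
    {A : Matrix m m α} (hA : IsUnit A.det) (u v : m → α) :
    (A + vecMulVec u v).det = A.det * (1 + v ⬝ᵥ A⁻¹ *ᵥ u) := by
  rw [vecMulVec_eq Unit, det_add_replicateCol_mul_replicateRow hA, Matrix.mul_assoc,
    ← replicateCol_mulVec, replicateRow_mul_replicateCol, det_unique (1 + _)]
  rfl

theorem Matrix.PosDef.add_sum_vecMulVec {m ι : Type*} [Fintype m] {V : Matrix m m ℝ}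
    (hV : V.PosDef) (s : Finset ι) (x : ι → m → ℝ) :
    (V + ∑ i ∈ s, vecMulVec (x i) (x i)).PosDef :=
  hV.add_posSemidef <| Finset.sum_induction _ PosSemidef (fun _ _ => PosSemidef.add) .zero
    fun i _ => posSemidef_vecMulVec_self_star (x i)

theorem Matrix.PosDef.log_det_add_vecMulVec_le {m : Type*} [Fintype m] [DecidableEq m]
    {W : Matrix m m ℝ} (hW : W.PosDef) (x : m → ℝ) :
    Real.log (W + vecMulVec x x).det ≤ Real.log W.det + x ⬝ᵥ W⁻¹ *ᵥ x := by
  have hq : 0 ≤ x ⬝ᵥ W⁻¹ *ᵥ x := by simpa using hW.inv.posSemidef.dotProduct_mulVec_nonneg x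
  rw [det_add_vecMulVec hW.det_pos.ne'.isUnit, Real.log_mul hW.det_pos.ne' (by positivity)]
  gcongr
  linarith [Real.log_le_sub_one_of_pos (show 0 < 1 + x ⬝ᵥ W⁻¹ *ᵥ x by positivity)]

/-- First inequality of Lemma 11 of Abbasi-Yadkori et al. (2011): for vectors
`X_1, X_2, …` in `ℝ^d` and a symmetric positive definite `V`, with
`V_t = V + Σ_{s=1}^t X_s X_sᵀ`, one has
`log(det(V_n)/det(V)) ≤ Σ_{t=1}^n ‖X_t‖²_{V_{t−1}⁻¹}`. -/
theorem log_det_ratio_le_sum_norms (d n : ℕ) (X : ℕ → Fin d → ℝ)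
    (V : Matrix (Fin d) (Fin d) ℝ) (hV : V.PosDef) :
    Real.log ((V + ∑ s ∈ Finset.range n, vecMulVec (X s) (X s)).det / V.det) ≤
      ∑ t ∈ Finset.range n,
        X t ⬝ᵥ (V + ∑ s ∈ Finset.range t, vecMulVec (X s) (X s))⁻¹.mulVec (X t) := by
  set Vt : ℕ → Matrix (Fin d) (Fin d) ℝ := fun t => V + ∑ s ∈ range t, vecMulVec (X s) (X s)
  have hVt (t : ℕ) : (Vt t).PosDef := hV.add_sum_vecMulVec _ X
  have hV0 : Vt 0 = V := by simp [Vt]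
  calc Real.log ((Vt n).det / V.det)
      = ∑ t ∈ range n, (Real.log (Vt (t + 1)).det - Real.log (Vt t).det) := by
        rw [sum_range_sub (fun t => Real.log (Vt t).det), hV0,
          Real.log_div (hVt n).det_pos.ne' hV.det_pos.ne']
    _ ≤ ∑ t ∈ range n, X t ⬝ᵥ (Vt t)⁻¹ *ᵥ X t := by
        gcongr with t
        have hstep : Vt (t + 1) = Vt t + vecMulVec (X t) (X t) := by
          simp only [Vt, sum_range_succ, add_assoc]
        linarith [hstep ▸ (hVt t).log_det_add_vecMulVec_le (X t)]
end

section
/- Let X_1, X_2, …, X_n be a sequence of vectors in ℝ^d, let V be a d×d symmetric positive definite matrix, and define V_t = V + Σ_{s=1}^{t} X_s X_sᵀ (so V_0 = V). Then Σ_{t=1}^{n} min{1, ‖X_t‖²_{V_{t−1}^{−1}}} ≤ 2(log det(V_n) − log det(V)), where ‖x‖²_M = xᵀMx. Moreover, if ‖X_t‖₂ ≤ L for all t, then 2(log det(V_n) − log det(V)) ≤ 2(d·log((trace(V) + nL²)/d) − log det(V)). -/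
open Matrix Finset

/-! By the matrix determinant lemma, adding `x xᵀ` to a positive definite `W` multiplies `det W`
by `1 + ‖x‖²_{W⁻¹}`, so `log det V_n - log det V` telescopes to `∑ log (1 + ‖X_t‖²_{V_{t-1}⁻¹})`,
and `min 1 u ≤ 2 u / (1 + u) ≤ 2 log (1 + u)`. For the second bound, AM–GM on the eigenvalues gives
`log det A ≤ d log (tr A / d)`, and `tr V_n = tr V + ∑ ‖X_t‖² ≤ tr V + n L²`. -/

lemma min_one_le_two_mul_log_one_add {u : ℝ} (hu : 0 ≤ u) : min 1 u ≤ 2 * Real.log (1 + u) := by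
  have hlog : u / (1 + u) ≤ Real.log (1 + u) :=
    calc u / (1 + u) = 1 - (1 + u)⁻¹ := by field_simp; ring
      _ ≤ Real.log (1 + u) := Real.one_sub_inv_le_log_of_pos (by linarith)
  have hmin : min 1 u ≤ 2 * (u / (1 + u)) := by
    rw [mul_div_assoc', le_div_iff₀ (by linarith)]
    rcases le_total u 1 with h | h
    · rw [min_eq_right h]; nlinarith
    · rw [min_eq_left h]; linarith
  linarith

lemma Real.sum_log_le_card_mul_log_mean {ι : Type*} (s : Finset ι) {z : ι → ℝ}
    (hz : ∀ i ∈ s, 0 < z i) : ∑ i ∈ s, Real.log (z i) ≤ #s * Real.log ((∑ i ∈ s, z i) / #s) := by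
  rcases s.eq_empty_or_nonempty with rfl | hs
  · simp
  have hcard : (0 : ℝ) < #s := by exact_mod_cast hs.card_pos
  have := strictConcaveOn_log_Ioi.concaveOn.le_map_sum (t := s) (w := fun _ => (#s : ℝ)⁻¹) (p := z)
    (fun _ _ => by positivity) (by simp [hcard.ne']) hz
  simp only [smul_eq_mul, ← mul_sum] at this
  rw [inv_mul_eq_div, inv_mul_eq_div, div_le_iff₀ hcard] at this
  linarith

namespace Matrix

variable {ι : Type*} [Fintype ι] [DecidableEq ι]

theorem det_add_vecMulVec_s14 {R : Type*} [CommRing R] {A : Matrix ι ι R} (hA : IsUnit A.det)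
    (u v : ι → R) : (A + vecMulVec u v).det = A.det * (1 + v ⬝ᵥ A⁻¹ *ᵥ u) := by
  rw [vecMulVec_eq Unit, det_add_replicateCol_mul_replicateRow hA,
    Matrix.mul_assoc, ← replicateCol_mulVec, det_unique (1 + _)]
  simp [replicateRow_mul_replicateCol_apply]

theorem PosDef.log_det_le_card_mul_log_trace_div {A : Matrix ι ι ℝ} (hA : A.PosDef) :
    Real.log A.det ≤ Fintype.card ι * Real.log (A.trace / Fintype.card ι) := by
  rw [hA.isHermitian.det_eq_prod_eigenvalues, hA.isHermitian.trace_eq_sum_eigenvalues]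
  simp only [RCLike.ofReal_real_eq_id, id]
  rw [Real.log_prod fun i _ => (hA.eigenvalues_pos i).ne']
  exact Real.sum_log_le_card_mul_log_mean univ fun i _ => hA.eigenvalues_pos i

theorem PosDef.log_det_le_of_trace_le {A : Matrix ι ι ℝ} (hA : A.PosDef) {c : ℝ}
    (hc : A.trace ≤ c) : Real.log A.det ≤ Fintype.card ι * Real.log (c / Fintype.card ι) := by
  cases isEmpty_or_nonempty ι
  · simp
  have hcard : (0 : ℝ) < Fintype.card ι := by exact_mod_cast Fintype.card_pos
  calc Real.log A.det ≤ Fintype.card ι * Real.log (A.trace / Fintype.card ι) :=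
        hA.log_det_le_card_mul_log_trace_div
    _ ≤ Fintype.card ι * Real.log (c / Fintype.card ι) := by
        gcongr
        exact div_pos hA.trace_pos hcard

end Matrix

noncomputable section

variable {ι : Type*}

/-- The paper's `V_t`, with the vectors indexed from `0`. -/
def regularizedGram (V : Matrix ι ι ℝ) (X : ℕ → ι → ℝ) (t : ℕ) : Matrix ι ι ℝ :=
  V + ∑ s ∈ range t, vecMulVec (X s) (X s)

variable {V : Matrix ι ι ℝ} {X : ℕ → ι → ℝ}

lemma regularizedGram_zero : regularizedGram V X 0 = V := by
  simp [regularizedGram]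

lemma regularizedGram_succ (t : ℕ) :
    regularizedGram V X (t + 1) = regularizedGram V X t + vecMulVec (X t) (X t) := by
  rw [regularizedGram, regularizedGram, sum_range_succ, add_assoc]

variable [Fintype ι]

lemma posDef_regularizedGram (hV : V.PosDef) (t : ℕ) : (regularizedGram V X t).PosDef :=
  hV.add_posSemidef <| posSemidef_sum _ fun s _ => by
    simpa using posSemidef_vecMulVec_self_star (X s)

lemma trace_regularizedGram_le {n : ℕ} {L : ℝ} (hX : ∀ t < n, ‖WithLp.toLp 2 (X t)‖ ≤ L) :
    (regularizedGram V X n).trace ≤ V.trace + n * L ^ 2 := by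
  have hsq (t : ℕ) (ht : t < n) : X t ⬝ᵥ X t ≤ L ^ 2 := by
    have := pow_le_pow_left₀ (norm_nonneg _) (hX t ht) 2
    rw [EuclideanSpace.real_norm_sq_eq] at this
    simpa [dotProduct, sq] using this
  calc (regularizedGram V X n).trace = V.trace + ∑ t ∈ range n, X t ⬝ᵥ X t := by
        simp only [regularizedGram, trace_add, trace_sum, trace_vecMulVec]
    _ ≤ V.trace + ∑ t ∈ range n, L ^ 2 := by
        gcongr with t ht
        exact hsq t (mem_range.mp ht)
    _ = V.trace + n * L ^ 2 := by simp

variable [DecidableEq ι]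

lemma dotProduct_inv_regularizedGram_mulVec_nonneg (hV : V.PosDef) (t : ℕ) :
    0 ≤ X t ⬝ᵥ (regularizedGram V X t)⁻¹ *ᵥ X t := by
  simpa using (posDef_regularizedGram hV t).inv.posSemidef.dotProduct_mulVec_nonneg (X t)

lemma log_det_regularizedGram_succ (hV : V.PosDef) (t : ℕ) :
    Real.log (regularizedGram V X (t + 1)).det = Real.log (regularizedGram V X t).det +
      Real.log (1 + X t ⬝ᵥ (regularizedGram V X t)⁻¹ *ᵥ X t) := by
  have hVt := posDef_regularizedGram (X := X) hV t
  rw [regularizedGram_succ, det_add_vecMulVec_s14 hVt.det_pos.ne'.isUnit,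
    Real.log_mul hVt.det_pos.ne'
      (by linarith [dotProduct_inv_regularizedGram_mulVec_nonneg (X := X) hV t])]

theorem sum_min_one_le_two_mul_log_det (hV : V.PosDef) (n : ℕ) :
    ∑ t ∈ range n, min 1 (X t ⬝ᵥ (regularizedGram V X t)⁻¹ *ᵥ X t) ≤
      2 * (Real.log (regularizedGram V X n).det - Real.log V.det) := by
  induction n with
  | zero => simp [regularizedGram_zero]
  | succ n ih =>
    rw [sum_range_succ, log_det_regularizedGram_succ hV]
    have hmin := min_one_le_two_mul_log_one_add
      (dotProduct_inv_regularizedGram_mulVec_nonneg (X := X) hV n)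
    linarith

end

/-- Elliptical potential lemma (second part of Lemma 11 of Abbasi-Yadkori et al. (2011)):
for vectors `X_1, X_2, …` in `ℝ^d`, symmetric positive definite `V`, and
`V_t = V + Σ_{s=1}^t X_s X_sᵀ`, one has
`Σ_{t=1}^n min{1, ‖X_t‖²_{V_{t−1}⁻¹}} ≤ 2(log det(V_n) − log det(V))`; moreover, if
`‖X_t‖₂ ≤ L` for all `t`, then
`2(log det(V_n) − log det(V)) ≤ 2(d·log((trace(V) + nL²)/d) − log det(V))`. -/
theorem elliptical_potential (d n : ℕ) (L : ℝ) (X : ℕ → Fin d → ℝ)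
    (V : Matrix (Fin d) (Fin d) ℝ) (hV : V.PosDef) :
    (∑ t ∈ Finset.range n,
        min 1 (X t ⬝ᵥ (V + ∑ s ∈ Finset.range t, vecMulVec (X s) (X s))⁻¹.mulVec (X t))) ≤
      2 * (Real.log (V + ∑ s ∈ Finset.range n, vecMulVec (X s) (X s)).det -
        Real.log V.det) ∧
    ((∀ t : ℕ, ‖(WithLp.equiv 2 (Fin d → ℝ)).symm (X t)‖ ≤ L) →
      2 * (Real.log (V + ∑ s ∈ Finset.range n, vecMulVec (X s) (X s)).det -
          Real.log V.det) ≤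
        2 * (d * Real.log ((V.trace + n * L ^ 2) / d) - Real.log V.det)) := by
  simp only [← regularizedGram.eq_1]
  refine ⟨sum_min_one_le_two_mul_log_det hV n, fun hL => ?_⟩
  have hlogdet := (posDef_regularizedGram hV n).log_det_le_of_trace_le
    (trace_regularizedGram_le fun t _ => hL t)
  rw [Fintype.card_fin] at hlogdet
  linarith
end
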